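/- arXiv:2501.11495 — 4 statements merged into one kernel-verified Lean document; each statement's English description precedes it below -/
import Mathlib

section
/- Let n, m ∈ ℕ, let τ ∈ [0,1] and t_k ∈ ℝ, and let x : ℝ → ℝ be (n+m+1)-times continuously differentiable on a neighbourhood of t_k. Then the defect of the Hermite–Obreschkoff formula, D(h) := Σ_{j=0}^{n} A_{n−j}^{m} ((τh)^j / j!) x^{(j)}(t_k) − Σ_{j=0}^{m} A_{n}^{m−j} ((−τh)^j / j!) x^{(j)}(t_k + τh), satisfies D(h) = O(h^{n+m+1}) as h → 0. -/
/-!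
Put `u = τ h`. Expanding each `x^{(j)}(t_k + u)` by Taylor's formula to order `n + m - j` leaves
a remainder `O(u^{n+m+1-j})`, which the factor `u^j` turns into `O(u^{n+m+1})`. The Taylor
polynomials cancel exactly: comparing the coefficients of `x^{(p)}(t_k) u^p / p!` reduces this to
`∑_j (-1)^j C(p, j) C(n+m-j, n) = C(n+m-p, m)`, which is the `p`-th forward difference of
`C(·, n)`.
-/

open Finset Filter Asymptotics Topology
open scoped Nat

theorem fwdDiff_iter_choose_eq_choose_sub {n m p : ℕ} (hp : p ≤ n + m) :
    (fwdDiff 1)^[p] (fun x ↦ (x.choose n : ℤ)) (n + m - p) = (n + m - p).choose m := by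
  rcases le_or_gt p n with hpn | hnp
  · obtain ⟨k, rfl⟩ := Nat.exists_eq_add_of_le hpn
    rw [fwdDiff_iter_choose]
    exact congrArg _ (Nat.choose_symm_of_eq_add (by omega))
  · obtain ⟨k, rfl⟩ := Nat.exists_eq_add_of_lt hnp
    have hconst : (fwdDiff 1)^[n] (fun x ↦ (x.choose n : ℤ)) = fun _ ↦ 1 := by
      simpa using fwdDiff_iter_choose 0 n
    rw [Nat.choose_eq_zero_of_lt (show n + m - (n + k + 1) < m by omega),
      show n + k + 1 = k + 1 + n by ring, Function.iterate_add_apply, hconst,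
      Function.iterate_succ_apply, fwdDiff_const, Function.iterate_fixed (fwdDiff_const 1 0)]
    rfl

theorem alternating_sum_choose_mul_choose_sub (n m p : ℕ) (hp : p ≤ n + m) :
    ∑ j ∈ range (p + 1), (-1 : ℤ) ^ j * p.choose j * (n + m - j).choose n =
      (n + m - p).choose m := by
  rw [← fwdDiff_iter_choose_eq_choose_sub hp, fwdDiff_iter_eq_sum_shift, ← sum_range_reflect]
  refine sum_congr rfl fun j hj ↦ ?_
  have hjp : j ≤ p := Nat.lt_succ_iff.1 (mem_range.1 hj)
  rw [Nat.add_sub_cancel, Nat.choose_symm hjp, smul_eq_mul, smul_eq_mul, mul_one,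
    show n + m - (p - j) = n + m - p + j by omega]

section Field

variable {𝕜 : Type*} [Field 𝕜] [CharZero 𝕜]

theorem sum_choose_mul_neg_pow_mul_pow_div_factorial {n m p : ℕ} (hp : p ≤ n + m) (u : 𝕜) :
    ∑ j ∈ range (p + 1),
        ((n + m - j).choose n : 𝕜) * ((-u) ^ j / j !) * (u ^ (p - j) / (p - j)!) =
      (n + m - p).choose m * (u ^ p / p !) := by
  have hcoeff : ∀ j ∈ range (p + 1),
      ((n + m - j).choose n : 𝕜) * ((-u) ^ j / j !) * (u ^ (p - j) / (p - j)!) =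
        ((-1 : ℤ) ^ j * p.choose j * (n + m - j).choose n : ℤ) * (u ^ p / p !) := by
    intro j hj
    have hjp : j ≤ p := Nat.lt_succ_iff.1 (mem_range.1 hj)
    have hfac : (p.choose j : 𝕜) * j ! * (p - j)! = p ! := by
      exact_mod_cast Nat.choose_mul_factorial_mul_factorial hjp
    have hchoose : (p.choose j : 𝕜) ≠ 0 := by exact_mod_cast (Nat.choose_pos hjp).ne'
    rw [← hfac, ← pow_sub_mul_pow u hjp, neg_pow]
    push_cast
    field_simp
  rw [sum_congr rfl hcoeff, ← sum_mul, ← Int.cast_sum,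
    alternating_sum_choose_mul_choose_sub n m p hp]
  norm_cast

/-- If `c p` are the derivatives at `t` of a polynomial of degree `≤ n + m`, the inner sums are its
derivatives at `t + u`: the Hermite–Obreschkoff formula is exact on such polynomials. -/
theorem hermiteObreschkoff_exact (n m : ℕ) (c : ℕ → 𝕜) (u : 𝕜) :
    ∑ j ∈ range (n + 1), ((n - j + m).choose (n - j) : 𝕜) * (u ^ j / j !) * c j =
      ∑ j ∈ range (m + 1), ((n + (m - j)).choose n : 𝕜) * ((-u) ^ j / j !) *
        ∑ i ∈ range (n + m - j + 1), u ^ i / i ! * c (i + j) := by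
  set a : ℕ → 𝕜 := fun j ↦ ((n + m - j).choose n : 𝕜) * ((-u) ^ j / j !)
  have hlhs : ∑ j ∈ range (n + 1), ((n - j + m).choose (n - j) : 𝕜) * (u ^ j / j !) * c j =
      ∑ p ∈ range (n + m + 1), ((n + m - p).choose m : 𝕜) * (u ^ p / p !) * c p := by
    refine sum_subset_zero_on_sdiff (range_subset_range.2 (by omega)) (fun p hp ↦ ?_)
      (fun p hp ↦ ?_)
    · simp only [Finset.mem_sdiff, mem_range] at hp
      rw [Nat.choose_eq_zero_of_lt (by omega : n + m - p < m)]
      simp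
    · have hpn : p ≤ n := Nat.lt_succ_iff.1 (mem_range.1 hp)
      rw [show n + m - p = n - p + m by omega, Nat.choose_symm_add]
  have hrhs : ∑ j ∈ range (m + 1), ((n + (m - j)).choose n : 𝕜) * ((-u) ^ j / j !) *
        ∑ i ∈ range (n + m - j + 1), u ^ i / i ! * c (i + j) =
      ∑ j ∈ range (n + m + 1), ∑ i ∈ range (n + m + 1 - j), a j * (u ^ i / i ! * c (i + j)) := by
    refine sum_subset_zero_on_sdiff (range_subset_range.2 (by omega)) (fun j hj ↦ ?_)
      (fun j hj ↦ ?_)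
    · simp only [Finset.mem_sdiff, mem_range] at hj
      simp [a, Nat.choose_eq_zero_of_lt (by omega : n + m - j < n)]
    · have hjm : j ≤ m := Nat.lt_succ_iff.1 (mem_range.1 hj)
      rw [mul_sum, show n + (m - j) = n + m - j by omega,
        show n + m + 1 - j = n + m - j + 1 by omega]
  rw [hlhs, hrhs, ← sum_range_diag_flip]
  refine sum_congr rfl fun p hp ↦ ?_
  rw [← sum_choose_mul_neg_pow_mul_pow_div_factorial (Nat.lt_succ_iff.1 (mem_range.1 hp)), sum_mul]
  refine sum_congr rfl fun j hj ↦ ?_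
  rw [Nat.sub_add_cancel (Nat.lt_succ_iff.1 (mem_range.1 hj))]
  ring

end Field

theorem ContDiffAt.iteratedDeriv {𝕜 F : Type*} [NontriviallyNormedField 𝕜] [NormedAddCommGroup F]
    [NormedSpace 𝕜 F] {f : 𝕜 → F} {x : 𝕜} {m n : WithTop ℕ∞} {j : ℕ}
    (hf : ContDiffAt 𝕜 n f x) (hmn : m + j ≤ n) : ContDiffAt 𝕜 m (iteratedDeriv j f) x := by
  induction j generalizing f n with
  | zero => simpa using hf.of_le (by simpa using hmn)
  | succ j ih =>
    rw [iteratedDeriv_succ']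
    exact ih (hf.derivWithin (by simpa [add_assoc] using hmn)) le_rfl

theorem iteratedDeriv_iteratedDeriv {𝕜 F : Type*} [NontriviallyNormedField 𝕜]
    [NormedAddCommGroup F] [NormedSpace 𝕜 F] (i j : ℕ) (f : 𝕜 → F) :
    iteratedDeriv i (iteratedDeriv j f) = iteratedDeriv (i + j) f := by
  simp only [iteratedDeriv_eq_iterate, Function.iterate_add_apply]

theorem taylor_isBigO_of_contDiffAt {E : Type*} [NormedAddCommGroup E] [NormedSpace ℝ E]
    {g : ℝ → E} {a : ℝ} {K : ℕ} (hg : ContDiffAt ℝ (K + 1) g a) :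
    (fun s ↦ g (a + s) - ∑ i ∈ range (K + 1), (s ^ i / i !) • iteratedDeriv i g a)
      =O[𝓝 0] fun s ↦ s ^ (K + 1) := by
  obtain ⟨U, hU, hgU⟩ := hg.contDiffOn le_rfl (by simp)
  obtain ⟨ε, hε, hball⟩ := Metric.mem_nhds_iff.1 hU
  set B := Metric.ball a ε
  have hlittle := taylor_isLittleO (convex_ball a ε) (Metric.mem_ball_self hε)
    (n := K + 1) (by exact_mod_cast hgU.mono hball)
  rw [nhdsWithin_eq_nhds.2 (Metric.ball_mem_nhds a hε)] at hlittle
  have hlead :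
      (fun x ↦ (((K + 1 : ℝ) * K !)⁻¹ * (x - a) ^ (K + 1)) • iteratedDerivWithin (K + 1) g B a)
        =O[𝓝 a] fun x ↦ (x - a) ^ (K + 1) := by
    simpa using ((isBigO_refl (fun x ↦ (x - a) ^ (K + 1)) (𝓝 a)).const_mul_left _).smul
      (isBigO_const_const (iteratedDerivWithin (K + 1) g B a) (one_ne_zero (α := ℝ)) (𝓝 a))
  have hbig : (fun x ↦ g x - taylorWithinEval g K B a x) =O[𝓝 a] fun x ↦ (x - a) ^ (K + 1) := by
    refine (hlittle.isBigO.add hlead).congr_left fun x ↦ ?_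
    rw [taylorWithinEval_succ]
    abel
  have htend : Tendsto (fun s : ℝ ↦ a + s) (𝓝 0) (𝓝 a) := by
    simpa using (continuous_const_add a).tendsto 0
  refine (hbig.comp_tendsto htend).congr (fun s ↦ ?_) (fun s ↦ ?_)
  · simp only [Function.comp_apply, taylor_within_apply, add_sub_cancel_left]
    congr 1
    refine sum_congr rfl fun i _ ↦ ?_
    rw [iteratedDerivWithin_of_isOpen Metric.isOpen_ball (Metric.mem_ball_self hε), div_eq_inv_mul]
  · simp

noncomputable def hermiteObreschkoffDefect (n m : ℕ) (x : ℝ → ℝ) (t u : ℝ) : ℝ :=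
  ∑ j ∈ range (n + 1), ((n - j + m).choose (n - j) : ℝ) * (u ^ j / j !) * iteratedDeriv j x t -
    ∑ j ∈ range (m + 1), ((n + (m - j)).choose n : ℝ) * ((-u) ^ j / j !) *
      iteratedDeriv j x (t + u)

theorem hermiteObreschkoffDefect_isBigO {n m : ℕ} {x : ℝ → ℝ} {t : ℝ}
    (hx : ContDiffAt ℝ (n + m + 1) x t) :
    hermiteObreschkoffDefect n m x t =O[𝓝 0] fun u ↦ u ^ (n + m + 1) := by
  have hterm : ∀ j ∈ range (m + 1),
      (fun u : ℝ ↦ ((n + (m - j)).choose n : ℝ) * ((-u) ^ j / j !) * (iteratedDeriv j x (t + u) -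
        ∑ i ∈ range (n + m - j + 1), u ^ i / i ! * iteratedDeriv (i + j) x t))
      =O[𝓝 0] fun u ↦ u ^ (n + m + 1) := by
    intro j hj
    have hjm : j ≤ m := Nat.lt_succ_iff.1 (mem_range.1 hj)
    have hcoeff : (fun u : ℝ ↦ ((n + (m - j)).choose n : ℝ) * ((-u) ^ j / j !))
        =O[𝓝 0] fun u ↦ u ^ j :=
      ((isBigO_refl _ _).const_mul_left (((n + (m - j)).choose n : ℝ) * ((-1) ^ j / j !)))
        |>.congr_left fun u ↦ by rw [neg_pow]; ring
    have htaylor := taylor_isBigO_of_contDiffAt (K := n + m - j) (hx.iteratedDeriv (j := j)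
      (by norm_cast; omega))
    simp only [smul_eq_mul, iteratedDeriv_iteratedDeriv] at htaylor
    refine (hcoeff.mul htaylor).congr_right fun u ↦ ?_
    rw [← pow_add, show j + (n + m - j + 1) = n + m + 1 by omega]
  have hdefect : hermiteObreschkoffDefect n m x t = fun u ↦ -∑ j ∈ range (m + 1),
      ((n + (m - j)).choose n : ℝ) * ((-u) ^ j / j !) * (iteratedDeriv j x (t + u) -
        ∑ i ∈ range (n + m - j + 1), u ^ i / i ! * iteratedDeriv (i + j) x t) := by
    ext u
    rw [hermiteObreschkoffDefect, hermiteObreschkoff_exact n m (fun p ↦ iteratedDeriv p x t) u]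
    simp only [mul_sub, sum_sub_distrib, neg_sub]
  rw [hdefect]
  exact (IsBigO.fun_sum hterm).neg_left

theorem hermite_obreschkoff_local_error_general (n m : ℕ) (τ : ℝ)
    (tk : ℝ) (x : ℝ → ℝ)
    (hx : ∀ᶠ t in nhds tk, ContDiffAt ℝ ((n + m + 1 : ℕ) : ℕ∞) x t) :
    (fun h : ℝ =>
        (∑ j ∈ Finset.range (n + 1),
            (((n - j) + m).choose (n - j) : ℝ) * ((τ * h) ^ j / (j.factorial : ℝ)) *
              iteratedDeriv j x tk)
        - ∑ j ∈ Finset.range (m + 1),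
            ((n + (m - j)).choose n : ℝ) * ((-(τ * h)) ^ j / (j.factorial : ℝ)) *
              iteratedDeriv j x (tk + τ * h))
      =O[nhds (0 : ℝ)] fun h : ℝ => h ^ (n + m + 1) := by
  have hdefect :=
    hermiteObreschkoffDefect_isBigO (n := n) (m := m) (by exact_mod_cast hx.self_of_nhds)
  have hscale : Tendsto (fun h : ℝ ↦ τ * h) (𝓝 0) (𝓝 0) := by
    simpa using (continuous_const_mul τ).tendsto 0
  have hpow : (fun h : ℝ ↦ (τ * h) ^ (n + m + 1)) =O[𝓝 0] fun h ↦ h ^ (n + m + 1) :=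
    ((isBigO_refl _ _).const_mul_left (τ ^ (n + m + 1))).congr_left fun h ↦ (mul_pow τ h _).symm
  exact (hdefect.comp_tendsto hscale).trans hpow

/-- Local error of the Hermite–Obreschkoff formula: if `x` is `(n+m+1)`-times continuously
differentiable on a neighbourhood of `t_k` and `τ ∈ [0,1]`, then the defect
`D(h) = Σ_{j=0}^{n} A_{n-j}^{m} ((τh)^j / j!) x^{(j)}(t_k)
       - Σ_{j=0}^{m} A_{n}^{m-j} ((-τh)^j / j!) x^{(j)}(t_k + τh)`
is `O(h^{n+m+1})` as `h → 0`. -/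
theorem hermite_obreschkoff_local_error (n m : ℕ) (τ : ℝ) (hτ : τ ∈ Set.Icc (0 : ℝ) 1)
    (tk : ℝ) (x : ℝ → ℝ)
    (hx : ∀ᶠ t in nhds tk, ContDiffAt ℝ ((n + m + 1 : ℕ) : ℕ∞) x t) :
    (fun h : ℝ =>
        (∑ j ∈ Finset.range (n + 1),
            (((n - j) + m).choose (n - j) : ℝ) * ((τ * h) ^ j / (j.factorial : ℝ)) *
              iteratedDeriv j x tk)
        - ∑ j ∈ Finset.range (m + 1),
            ((n + (m - j)).choose n : ℝ) * ((-(τ * h)) ^ j / (j.factorial : ℝ)) *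
              iteratedDeriv j x (tk + τ * h))
      =O[nhds (0 : ℝ)] fun h : ℝ => h ^ (n + m + 1) :=
  hermite_obreschkoff_local_error_general n m τ tk x hx
end

section
/- Let s ≥ 2 be an integer, h ≠ 0 a real number, and c_2, …, c_s pairwise distinct nonzero reals. Then the (s−1)×(s−1) real matrix Q with entries Q_{i,j} = −(1/s)·(c_{i+1} h)^{j+1} / j! (for i, j = 1, …, s−1) is invertible. -/
/-!
Pulling the factor `(c i h)^2` out of row `i` and `1 / (j+1)!` out of column `j` leaves the
Vandermonde matrix of the distinct nodes `c i * h`, so `Q` is a product of two invertible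
diagonal matrices and an invertible Vandermonde matrix.
-/

open Matrix

namespace Matrix

theorem isUnit_vandermonde {K : Type*} [Field K] {n : ℕ} {v : Fin n → K}
    (hv : Function.Injective v) : IsUnit (vandermonde v) :=
  (isUnit_iff_isUnit_det _).2 (det_vandermonde_ne_zero_iff.2 hv).isUnit

theorem isUnit_of_eq_scaled_vandermonde {K : Type*} [Field K] {n : ℕ} {a v b : Fin n → K}
    (ha : ∀ i, a i ≠ 0) (hv : Function.Injective v) (hb : ∀ j, b j ≠ 0)
    {M : Matrix (Fin n) (Fin n) K} (hM : ∀ i j, M i j = a i * v i ^ (j : ℕ) * b j) :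
    IsUnit M := by
  have hfac : M = diagonal a * vandermonde v * diagonal b := by
    ext i j
    simp [hM]
  rw [hfac]
  refine ((isUnit_diagonal.2 ?_).mul (isUnit_vandermonde hv)).mul (isUnit_diagonal.2 ?_)
  · exact Pi.isUnit_iff.2 fun i => (ha i).isUnit
  · exact Pi.isUnit_iff.2 fun j => (hb j).isUnit

end Matrix

/-- Let `s ≥ 2`, `h ≠ 0`, and let `c_2, …, c_s` (here `c : Fin (s-1) → ℝ`) be pairwise
distinct nonzero reals. Then the `(s-1) × (s-1)` matrix `Q` with entries
`Q_{i,j} = -(1/s) (c_{i+1} h)^{j+1} / j!` (for `i, j = 1, …, s-1`) is invertible. -/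
theorem Q_matrix_invertible (s : ℕ) (hs : 2 ≤ s) (h : ℝ) (hh : h ≠ 0)
    (c : Fin (s - 1) → ℝ) (hc : Function.Injective c) (hc0 : ∀ i, c i ≠ 0)
    (Q : Matrix (Fin (s - 1)) (Fin (s - 1)) ℝ)
    (hQ : ∀ i j, Q i j =
      -(1 / (s : ℝ)) * (c i * h) ^ ((j : ℕ) + 2) / ((((j : ℕ) + 1).factorial : ℝ))) :
    IsUnit Q := by
  have hs0 : (s : ℝ) ≠ 0 := Nat.cast_ne_zero.2 (by omega)
  refine isUnit_of_eq_scaled_vandermonde (a := fun i => -(1 / (s : ℝ)) * (c i * h) ^ 2)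
    (v := fun i => c i * h) (b := fun j => ((((j : ℕ) + 1).factorial : ℝ))⁻¹)
    ?_ ((mul_left_injective₀ hh).comp hc) ?_ fun i j => ?_
  · intro i
    simp [hs0, hh, hc0 i]
  · intro j
    simp [Nat.factorial_ne_zero]
  · rw [hQ, pow_add]
    ring
end

section
/- Let s ≥ 2 be an integer, let c_1 = 0 < c_2 < … < c_s = 1 be the s distinct real zeros of q_s, and let h ≠ 0 be a real number. Then the matrix A_s := M − P Q⁻¹ N arising from the Hermite–Obreschkoff formulas with pairs (s,0) and (s−1,1) coincides with the Runge–Kutta coefficient matrix of the s-stage Lobatto IIIA collocation method: for all i, j ∈ {1,…,s}, (A_s)_{i,j} = ∫_0^{c_i} ℓ_j(τ) dτ. In particular A_s does not depend on h. -/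
/-!
Let `W` be the `(s-1) × s` matrix with entries `W k j = (k+1)! a_{j,k+1} / h^(k+2)`, where
`ℓ_j = ∑ a_{j,m} X^m`. Then `(Q W) i j` collapses to `-(c_{i+1}/s) (ℓ_j(c_{i+1}) - ℓ_j(0))`,
which is `N i j` because `ℓ_j` is `1` at `c_j` and `0` at the other nodes (and `c_1 = 0`).
Likewise `(P W) i j = ℓ_j(0) c_i - ∫_0^{c_i} ℓ_j`, which is `M i j - ∫_0^{c_i} ℓ_j`.
Since `Q` is a Vandermonde matrix in the distinct nonzero numbers `c_{i+1} h`, up to invertible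
diagonal factors, `Q⁻¹ N = W`, so `M - P Q⁻¹ N = M - P W` is the matrix of integrals.
-/

open Polynomial Matrix Finset

namespace Polynomial

theorem eval_eq_coeff_zero_add_sum_range {R : Type*} [CommSemiring R] {p : R[X]} {n : ℕ}
    (hp : p.natDegree ≤ n) (x : R) :
    p.eval x = p.coeff 0 + ∑ k ∈ range n, p.coeff (k + 1) * x ^ (k + 1) := by
  rw [eval_eq_sum_range' (Nat.lt_succ_of_le hp), sum_range_succ', add_comm]
  simp

theorem integral_eval_eq_coeff_zero_mul_add_sum_range {p : ℝ[X]} {n : ℕ}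
    (hp : p.natDegree ≤ n) (t : ℝ) :
    ∫ τ in (0 : ℝ)..t, p.eval τ =
      p.coeff 0 * t + ∑ k ∈ range n, p.coeff (k + 1) / (k + 2) * t ^ (k + 2) := by
  have hderiv : ∀ x, HasDerivAt
      (fun t => p.coeff 0 * t + ∑ k ∈ range n, p.coeff (k + 1) / (k + 2) * t ^ (k + 2))
      (p.eval x) x := by
    intro x
    have hterm : ∀ k ∈ range n, HasDerivAt (fun t => p.coeff (k + 1) / (k + 2) * t ^ (k + 2))
        (p.coeff (k + 1) * x ^ (k + 1)) x := by
      intro k _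
      refine ((hasDerivAt_pow (k + 2) x).const_mul _).congr_deriv ?_
      push_cast
      field_simp
    rw [eval_eq_coeff_zero_add_sum_range hp]
    simpa using ((hasDerivAt_id' x).const_mul (p.coeff 0)).fun_add (HasDerivAt.fun_sum hterm)
  rw [intervalIntegral.integral_eq_sub_of_hasDerivAt (fun x _ => hderiv x)
    (p.continuous.intervalIntegrable _ _)]
  simp

end Polynomial

namespace Lagrange

variable {F ι : Type*} [Field F] [DecidableEq ι] {s : Finset ι} {v : ι → F}

theorem eval_basis_eq_prod (j : ι) (x : F) :
    (Lagrange.basis s v j).eval x = ∏ l ∈ s.erase j, (x - v l) / (v j - v l) := by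
  simp only [Lagrange.basis, eval_prod, basisDivisor, eval_mul, eval_C, eval_sub, eval_X,
    div_eq_inv_mul]

theorem eval_basis_at_node {i : ι} (hvs : Set.InjOn v s) (hi : i ∈ s) (j : ι) :
    (Lagrange.basis s v j).eval (v i) = if i = j then 1 else 0 := by
  split_ifs with hij
  · subst hij
    exact eval_basis_self hvs hi
  · exact eval_basis_of_ne (Ne.symm hij) hi

end Lagrange

noncomputable section

namespace HermiteObreschkoff

def scaledCoeffMatrix {ι : Type*} (n : ℕ) (h : ℝ) (p : ι → ℝ[X]) : Matrix (Fin n) ι ℝ :=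
  of fun k j => (((k : ℕ) + 1).factorial : ℝ) * (p j).coeff ((k : ℕ) + 1) / h ^ ((k : ℕ) + 2)

variable {n : ℕ} (c : Fin (n + 1) → ℝ) (h : ℝ)

/- The paper's `M, P, Q, N` for `s = n + 1` stages, with 0-based indices: node `c i` is the
paper's `c_{i+1}`, and row `i` of `Q` and `N` belongs to the node `c i.succ`. -/

def matM : Matrix (Fin (n + 1)) (Fin (n + 1)) ℝ :=
  of fun i j => if (j : ℕ) = 0 then c i else 0

def matP : Matrix (Fin (n + 1)) (Fin n) ℝ :=
  of fun i k => -((c i * h) ^ ((k : ℕ) + 2)) / ((((k : ℕ) + 2).factorial : ℝ))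

def matQ : Matrix (Fin n) (Fin n) ℝ :=
  of fun i k => -(1 / ((n + 1 : ℕ) : ℝ)) * (c i.succ * h) ^ ((k : ℕ) + 2) /
    ((((k : ℕ) + 1).factorial : ℝ))

def matN : Matrix (Fin n) (Fin (n + 1)) ℝ :=
  of fun i j =>
    if (j : ℕ) = 0 then c i.succ / ((n + 1 : ℕ) : ℝ)
    else if (j : ℕ) = (i : ℕ) + 1 then -(c i.succ) / ((n + 1 : ℕ) : ℝ)
    else 0

variable {c h}

theorem matQ_eq_diagonal_mul_vandermonde_mul_diagonal :
    matQ c h = diagonal (fun i => -(1 / ((n + 1 : ℕ) : ℝ)) * (c i.succ * h) ^ 2) *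
      vandermonde (fun i => c i.succ * h) *
      diagonal (fun k : Fin n => ((((k : ℕ) + 1).factorial : ℝ))⁻¹) := by
  ext i k
  simp only [matQ, of_apply, mul_diagonal, diagonal_mul, vandermonde_apply]
  ring

theorem isUnit_det_matQ (hc : Function.Injective c) (hc0 : c 0 = 0) (hh : h ≠ 0) :
    IsUnit (matQ c h).det := by
  have hnode : ∀ i : Fin n, c i.succ ≠ 0 := fun i => hc0 ▸ hc.ne (Fin.succ_ne_zero i)
  rw [matQ_eq_diagonal_mul_vandermonde_mul_diagonal, det_mul, det_mul, det_diagonal,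
    det_diagonal, isUnit_iff_ne_zero]
  refine mul_ne_zero (mul_ne_zero ?_ ?_) ?_
  · exact prod_ne_zero_iff.mpr fun i _ => by simp [hnode i, hh, Nat.cast_add_one_ne_zero]
  · exact det_vandermonde_ne_zero_iff.mpr fun a b hab =>
      Fin.succ_injective _ (hc (mul_right_cancel₀ hh hab))
  · exact prod_ne_zero_iff.mpr fun k _ => by positivity

variable {ι : Type*} {p : ι → ℝ[X]}

theorem matQ_mul_scaledCoeffMatrix_apply (hh : h ≠ 0) (hp : ∀ j, (p j).natDegree ≤ n)
    (i : Fin n) (j : ι) :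
    (matQ c h * scaledCoeffMatrix n h p) i j =
      -(1 / ((n + 1 : ℕ) : ℝ)) * c i.succ * ((p j).eval (c i.succ) - (p j).coeff 0) := by
  rw [eval_eq_coeff_zero_add_sum_range (hp j), add_sub_cancel_left, mul_apply, mul_sum,
    ← Fin.sum_univ_eq_sum_range]
  refine sum_congr rfl fun k _ => ?_
  simp only [matQ, scaledCoeffMatrix, of_apply]
  field_simp
  ring

theorem matP_mul_scaledCoeffMatrix_apply (hh : h ≠ 0) (hp : ∀ j, (p j).natDegree ≤ n)
    (i : Fin (n + 1)) (j : ι) :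
    (matP c h * scaledCoeffMatrix n h p) i j =
      (p j).coeff 0 * c i - ∫ τ in (0 : ℝ)..c i, (p j).eval τ := by
  rw [integral_eval_eq_coeff_zero_mul_add_sum_range (hp j), sub_add_cancel_left, mul_apply,
    ← Fin.sum_univ_eq_sum_range, ← sum_neg_distrib]
  refine sum_congr rfl fun k _ => ?_
  simp only [matP, scaledCoeffMatrix, of_apply, Nat.factorial_succ (k + 1)]
  push_cast
  field_simp
  ring

theorem natDegree_basis_le (hc : Function.Injective c) (j : Fin (n + 1)) :
    (Lagrange.basis univ c j).natDegree ≤ n := by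
  rw [Lagrange.natDegree_basis hc.injOn (mem_univ j), card_univ, Fintype.card_fin,
    Nat.add_sub_cancel]

theorem coeff_zero_basis (hc : Function.Injective c) (hc0 : c 0 = 0) (j : Fin (n + 1)) :
    (Lagrange.basis univ c j).coeff 0 = if (j : ℕ) = 0 then 1 else 0 := by
  have hnode := Lagrange.eval_basis_at_node hc.injOn (mem_univ 0) j
  rw [hc0] at hnode
  rw [coeff_zero_eq_eval_zero, hnode]
  simp only [Fin.ext_iff, Fin.val_zero, eq_comm (a := 0)]

theorem matQ_mul_scaledCoeffMatrix_basis (hc : Function.Injective c) (hc0 : c 0 = 0)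
    (hh : h ≠ 0) : matQ c h * scaledCoeffMatrix n h (Lagrange.basis univ c) = matN c := by
  ext i j
  rw [matQ_mul_scaledCoeffMatrix_apply hh (natDegree_basis_le hc), coeff_zero_basis hc hc0,
    Lagrange.eval_basis_at_node hc.injOn (mem_univ _) j]
  simp only [matN, of_apply, Fin.ext_iff, Fin.val_succ]
  split_ifs <;> first | omega | ring

theorem matQ_inv_mul_matN (hc : Function.Injective c) (hc0 : c 0 = 0) (hh : h ≠ 0) :
    (matQ c h)⁻¹ * matN c = scaledCoeffMatrix n h (Lagrange.basis univ c) := by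
  rw [← matQ_mul_scaledCoeffMatrix_basis hc hc0 hh, ← Matrix.mul_assoc,
    nonsing_inv_mul _ (isUnit_det_matQ hc hc0 hh), Matrix.one_mul]

theorem matM_sub_matP_mul_scaledCoeffMatrix_basis (hc : Function.Injective c) (hc0 : c 0 = 0)
    (hh : h ≠ 0) (i j : Fin (n + 1)) :
    (matM c - matP c h * scaledCoeffMatrix n h (Lagrange.basis univ c)) i j =
      ∫ τ in (0 : ℝ)..c i, (Lagrange.basis univ c j).eval τ := by
  rw [Matrix.sub_apply, matP_mul_scaledCoeffMatrix_apply hh (natDegree_basis_le hc),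
    coeff_zero_basis hc hc0]
  simp only [matM, of_apply]
  split_ifs <;> simp

end HermiteObreschkoff

end

open HermiteObreschkoff in
/-- Let `s ≥ 2`, let `c_1 = 0 < c_2 < … < c_s = 1` be the `s` distinct real zeros of
`q_s = d^(s-2)/dX^(s-2) (X^(s-1)(X-1)^(s-1))`, and let `h ≠ 0`. Then the matrix
`A_s = M - P Q⁻¹ N` arising from the Hermite–Obreschkoff formulas with pairs `(s,0)` and
`(s-1,1)` coincides with the Runge–Kutta coefficient matrix of the `s`-stage Lobatto IIIA
collocation method: `(A_s)_{i,j} = ∫_0^{c_i} ℓ_j(τ) dτ` with `ℓ_j` the `j`-th Lagrange basis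
polynomial for the nodes `c_1, …, c_s`. In particular `A_s` does not depend on `h`. -/
theorem hermite_obreschkoff_gives_lobattoIIIA (s : ℕ) (hs : 2 ≤ s)
    (c : Fin s → ℝ) (hmono : StrictMono c)
    (hc0 : c ⟨0, by omega⟩ = 0)
    (h : ℝ) (hh : h ≠ 0)
    (M : Matrix (Fin s) (Fin s) ℝ)
    (hM : ∀ i j, M i j = if (j : ℕ) = 0 then c i else 0)
    (P : Matrix (Fin s) (Fin (s - 1)) ℝ)
    (hP : ∀ i j, P i j = -((c i * h) ^ ((j : ℕ) + 2)) / ((((j : ℕ) + 2).factorial : ℝ)))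
    (Q : Matrix (Fin (s - 1)) (Fin (s - 1)) ℝ)
    (hQ : ∀ i j, Q i j = -(1 / (s : ℝ)) *
      (c ⟨(i : ℕ) + 1, by have := i.isLt; omega⟩ * h) ^ ((j : ℕ) + 2) /
        ((((j : ℕ) + 1).factorial : ℝ)))
    (N : Matrix (Fin (s - 1)) (Fin s) ℝ)
    (hN : ∀ i j, N i j =
      if (j : ℕ) = 0 then c ⟨(i : ℕ) + 1, by have := i.isLt; omega⟩ / (s : ℝ)
      else if (j : ℕ) = (i : ℕ) + 1 then
        -(c ⟨(i : ℕ) + 1, by have := i.isLt; omega⟩) / (s : ℝ)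
      else 0)
    (A : Matrix (Fin s) (Fin s) ℝ) (hA : A = M - P * Q⁻¹ * N) :
    ∀ i j, A i j = ∫ τ in (0 : ℝ)..(c i),
      ∏ l ∈ Finset.univ.erase j, (τ - c l) / (c j - c l) := by
  obtain ⟨n, rfl⟩ : ∃ n, s = n + 1 := ⟨s - 1, by omega⟩
  -- `Fin (n + 1 - 1)` is `Fin n` and `⟨i + 1, _⟩` is `i.succ` definitionally.
  obtain rfl : M = matM c := Matrix.ext hM
  obtain rfl : P = matP c h := Matrix.ext hP
  obtain rfl : Q = matQ c h := Matrix.ext hQ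
  obtain rfl : N = matN c := Matrix.ext hN
  intro i j
  rw [hA, Matrix.mul_assoc, matQ_inv_mul_matN hmono.injective hc0 hh,
    matM_sub_matP_mul_scaledCoeffMatrix_basis hmono.injective hc0 hh]
  simp only [Lagrange.eval_basis_eq_prod]
end

section
/- For all reals s, p, z with b·s + 1 > 0 and z + φ(s,p) > 0, the IDA-PBC control law r̂(s,p,z) = (ĜᵀĜ)⁻¹ Ĝᵀ ((J_d(s) − R_d)∇H_d(s,p,z) − f̂(s,p,z)) achieves exact matching: f̂(s,p,z) + Ĝ(s,p,z)·r̂(s,p,z) = (J_d(s) − R_d)∇H_d(s,p,z). -/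
open Matrix

/-- Exact matching of the IDA-PBC control law for the MagLev system: with
`r̂(s,p,z) = (ĜᵀĜ)⁻¹ Ĝᵀ ((J_d(s) - R_d)∇H_d(s,p,z) - f̂(s,p,z))` one has
`f̂(s,p,z) + Ĝ(s,p,z)·r̂(s,p,z) = (J_d(s) - R_d)∇H_d(s,p,z)` whenever `b·s + 1 > 0`
and `z + φ(s,p) > 0`. -/
theorem maglev_ida_pbc_exact_matching
    (m g r Linf a b C k₁ k₂ sstar : ℝ)
    (hm : 0 < m) (hg : 0 < g) (hr : 0 < r) (hLinf : 0 < Linf) (ha : 0 < a) (hb : 0 < b)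
    (hC : 0 < C) (hk₁ : 0 < k₁) (hk₂ : 0 < k₂)
    (L L' : ℝ → ℝ)
    (hL : ∀ x, L x = Linf + a / (b * x + 1) ^ 3)
    (hL' : ∀ x, L' x = -(3 * a * b) / (b * x + 1) ^ 4)
    (φ : ℝ → ℝ → ℝ)
    (hφ : ∀ x ρ, φ x ρ = (2 / L' x) * (-C * (x - sstar) - k₁ * ρ / m - m * g))
    (gradH : ℝ → ℝ → ℝ → Fin 3 → ℝ)
    (hgradH : ∀ s p z, gradH s p z = ![C * (s - sstar), p / m, z])
    (Jd : ℝ → Matrix (Fin 3) (Fin 3) ℝ)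
    (hJd : ∀ s, Jd s = !![0, 1, 0; -1, 0, L' s / 2; 0, -(L' s) / 2, 0])
    (Rd : Matrix (Fin 3) (Fin 3) ℝ) (hRd : Rd = !![0, 0, 0; 0, k₁, 0; 0, 0, k₂])
    (fhat : ℝ → ℝ → ℝ → Fin 3 → ℝ)
    (hfhat : ∀ s p z, fhat s p z =
      ![p / m,
        m * g + (L' s / 2) * (z + φ s p),
        -(2 / L s) * (r + L' s * (p / m)) * (z + φ s p)
          - (deriv (fun σ => φ σ p) s * (p / m)
             + deriv (fun ρ => φ s ρ) p * (m * g + (L' s / 2) * (z + φ s p)))])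
    (Ghat : ℝ → ℝ → ℝ → Fin 3 → ℝ)
    (hGhat : ∀ s p z, Ghat s p z = ![0, 0, 2 * Real.sqrt (z + φ s p) / L s])
    (rhat : ℝ → ℝ → ℝ → ℝ)
    (hrhat : ∀ s p z, rhat s p z =
      (Ghat s p z ⬝ᵥ (((Jd s - Rd) *ᵥ gradH s p z) - fhat s p z))
        / (Ghat s p z ⬝ᵥ Ghat s p z))
    (s p z : ℝ) (hbs : 0 < b * s + 1) (hzφ : 0 < z + φ s p) :
    fhat s p z + rhat s p z • Ghat s p z = (Jd s - Rd) *ᵥ gradH s p z := by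

  have hL's : L' s ≠ 0 := by
    rw [hL']
    have h4 : (0:ℝ) < (b * s + 1) ^ 4 := by positivity
    have : (0:ℝ) < 3 * a * b := by positivity
    intro h
    rw [div_eq_zero_iff] at h
    rcases h with h | h
    · linarith
    · linarith
  have hLs : 0 < L s := by
    rw [hL]; positivity
  have hsqrt : 0 < Real.sqrt (z + φ s p) := Real.sqrt_pos.mpr hzφ
  have hg3 : (2 * Real.sqrt (z + φ s p) / L s) ≠ 0 := by positivity
  have hphi : L' s / 2 * φ s p = -C * (s - sstar) - k₁ * p / m - m * g := by
    rw [hφ]; field_simp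
  funext i
  fin_cases i
  · simp [hfhat, hGhat, hJd, hRd, hgradH, Matrix.sub_apply, Matrix.mulVec,
      dotProduct, Fin.sum_univ_three, Pi.add_apply, Pi.smul_apply, smul_eq_mul]
  · simp only [hfhat, hGhat, hJd, hRd, hgradH, Matrix.sub_apply, Matrix.mulVec,
      dotProduct, Fin.sum_univ_three, Pi.add_apply, Pi.smul_apply, smul_eq_mul]
    simp only [Matrix.cons_val_zero, Matrix.cons_val_one, Matrix.head_cons,
      Matrix.cons_val_two, Matrix.tail_cons, Matrix.head_fin_const]
    simp [Matrix.of_apply]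
    linear_combination hphi
  · have key : rhat s p z * (2 * Real.sqrt (z + φ s p) / L s)
        = ((Jd s - Rd) *ᵥ gradH s p z) 2 - fhat s p z 2 := by
      rw [hrhat]
      have hG : Ghat s p z = ![0, 0, 2 * Real.sqrt (z + φ s p) / L s] := hGhat s p z
      rw [hG]
      simp only [dotProduct, Fin.sum_univ_three, Matrix.cons_val_zero,
        Matrix.cons_val_one, Matrix.head_cons, Matrix.cons_val_two,
        Matrix.tail_cons, Pi.sub_apply, zero_mul, zero_add]
      field_simp
    simp only [Pi.add_apply, Pi.smul_apply, smul_eq_mul, hGhat]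
    show fhat s p z 2 + rhat s p z * (![0, 0, 2 * Real.sqrt (z + φ s p) / L s] : Fin 3 → ℝ) 2
        = ((Jd s - Rd) *ᵥ gradH s p z) 2
    rw [show (![0, 0, 2 * Real.sqrt (z + φ s p) / L s] : Fin 3 → ℝ) 2
        = 2 * Real.sqrt (z + φ s p) / L s from rfl]
    rw [key]; ring
end
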